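/- arXiv:1804.08648 — 3 statements merged into one kernel-verified Lean document; each statement's English description precedes it below -/
import Mathlib

section
/- Under the structural assumption E'(u) v = ⟪Q(u) u, v⟫ with A dissipative, i.e., ⟪A(w), w⟫ ≤ 0 for all w, every differentiable solution u of Q(u(t))* u'(t) = A(u(t)) has nonincreasing energy: t ↦ E(u(t)) is monotone nonincreasing. -/
/-!
Along a solution, `d/dt E(u) = ⟪Q(u) u, u'⟫ = ⟪u, Q(u)* u'⟫ = ⟪u, A(u)⟫ ≤ 0`.
-/

open scoped RealInnerProductSpace

theorem hasDerivAt_comp_of_fderiv_eq_inner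
    {H : Type*} [NormedAddCommGroup H] [InnerProductSpace ℝ H] [CompleteSpace H]
    {E : H → ℝ} {T : H →L[ℝ] H} {u : ℝ → H} {u' : H} {t : ℝ}
    (hE : DifferentiableAt ℝ E (u t)) (hT : ∀ v, fderiv ℝ E (u t) v = ⟪T (u t), v⟫)
    (hu : HasDerivAt u u' t) :
    HasDerivAt (fun s => E (u s)) ⟪u t, ContinuousLinearMap.adjoint T u'⟫ t := by
  rw [ContinuousLinearMap.adjoint_inner_right, ← hT]
  exact hE.hasFDerivAt.comp_hasDerivAt t hu

/-- Energy decay: with `E'(u) v = ⟪Q(u) u, v⟫` and `A` dissipative (`⟪A w, w⟫ ≤ 0`),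
every differentiable solution of `Q(u)* ∂ₜu = A(u)` on `t ≥ 0` has nonincreasing energy. -/
theorem energy_nonincreasing
    {H : Type*} [NormedAddCommGroup H] [InnerProductSpace ℝ H] [CompleteSpace H]
    (E : H → ℝ) (hE : Differentiable ℝ E)
    (Q : H → (H →L[ℝ] H))
    (hQ : ∀ u v : H, fderiv ℝ E u v = ⟪Q u u, v⟫)
    (A : H → H) (hA : ∀ w : H, ⟪A w, w⟫ ≤ 0)
    (u : ℝ → H) (hu : Differentiable ℝ u)
    (heq : ∀ t : ℝ, 0 ≤ t → ContinuousLinearMap.adjoint (Q (u t)) (deriv u t) = A (u t)) :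
    AntitoneOn (fun t => E (u t)) (Set.Ici (0 : ℝ)) := by
  have hderiv : ∀ t, HasDerivAt (fun s => E (u s))
      ⟪u t, ContinuousLinearMap.adjoint (Q (u t)) (deriv u t)⟫ t := fun t =>
    hasDerivAt_comp_of_fderiv_eq_inner (hE _) (hQ _) (hu t).hasDerivAt
  refine antitoneOn_of_hasDerivWithinAt_nonpos (convex_Ici 0)
    (fun t _ => (hderiv t).continuousAt.continuousWithinAt)
    (fun t _ => (hderiv t).hasDerivWithinAt) fun t ht => ?_
  rw [interior_Ici] at ht
  rw [heq t (ht.le), real_inner_comm]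
  exact hA (u t)
end

section
/- Let Vₕ be a subspace of H and suppose uₕ : ℝ → Vₕ is differentiable and satisfies the Galerkin equations ⟪Q(uₕ(t))* uₕ'(t), vₕ⟫ = ⟪A(uₕ(t)), vₕ⟫ for all vₕ ∈ Vₕ. Then the same dissipation identity holds for the semi-discrete solution: d/dt E(uₕ(t)) = ⟪A(uₕ(t)), uₕ(t)⟫. -/
open scoped RealInnerProductSpace

theorem deriv_comp_eq_inner_adjoint_deriv
    {H : Type*} [NormedAddCommGroup H] [InnerProductSpace ℝ H] [CompleteSpace H]
    {E : H → ℝ} {Q : H → (H →L[ℝ] H)} {u : ℝ → H} {t : ℝ}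
    (hE : DifferentiableAt ℝ E (u t)) (hQ : ∀ v : H, fderiv ℝ E (u t) v = ⟪Q (u t) (u t), v⟫)
    (hu : DifferentiableAt ℝ u t) :
    deriv (fun s => E (u s)) t = ⟪ContinuousLinearMap.adjoint (Q (u t)) (deriv u t), u t⟫ := by
  rw [← Function.comp_def, fderiv_comp_deriv t hE hu, hQ,
    ContinuousLinearMap.adjoint_inner_left, real_inner_comm]

theorem galerkin_dissipation_identity_general
    {H : Type*} [NormedAddCommGroup H] [InnerProductSpace ℝ H] [CompleteSpace H]
    (Vh : Submodule ℝ H)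
    (E : H → ℝ) (hE : Differentiable ℝ E)
    (Q : H → (H →L[ℝ] H))
    (hQ : ∀ u v : H, fderiv ℝ E u v = ⟪Q u u, v⟫)
    (A : H → H)
    (uh : ℝ → H) (huh : Differentiable ℝ uh)
    (hmem : ∀ t : ℝ, uh t ∈ Vh)
    (heq : ∀ t : ℝ, ∀ vh ∈ Vh,
      ⟪ContinuousLinearMap.adjoint (Q (uh t)) (deriv uh t), vh⟫ = ⟪A (uh t), vh⟫) :
    ∀ t : ℝ, deriv (fun s => E (uh s)) t = ⟪A (uh t), uh t⟫ := fun t => by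
  rw [deriv_comp_eq_inner_adjoint_deriv (hE _) (hQ _) (huh t)]
  -- `uₕ(t) ∈ Vₕ` is itself an admissible test function.
  exact heq t (uh t) (hmem t)

/-- Galerkin semi-discretization (Theorem 2): if `uₕ(t)` stays in the subspace `Vₕ` and
satisfies the Galerkin equations tested against all `vₕ ∈ Vₕ`, the dissipation identity
is inherited. -/
theorem galerkin_dissipation_identity
    {H : Type*} [NormedAddCommGroup H] [InnerProductSpace ℝ H] [CompleteSpace H]
    (Vh : Submodule ℝ H) (hVh : IsClosed (Vh : Set H))
    (E : H → ℝ) (hE : Differentiable ℝ E)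
    (Q : H → (H →L[ℝ] H))
    (hQ : ∀ u v : H, fderiv ℝ E u v = ⟪Q u u, v⟫)
    (A : H → H)
    (uh : ℝ → H) (huh : Differentiable ℝ uh)
    (hmem : ∀ t : ℝ, uh t ∈ Vh)
    (heq : ∀ t : ℝ, ∀ vh ∈ Vh,
      ⟪ContinuousLinearMap.adjoint (Q (uh t)) (deriv uh t), vh⟫ = ⟪A (uh t), vh⟫) :
    ∀ t : ℝ, deriv (fun s => E (uh s)) t = ⟪A (uh t), uh t⟫ :=
  galerkin_dissipation_identity_general Vh E hE Q hQ A uh huh hmem heq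
end

section
/- (Implicit Euler dissipation inequality.) Suppose E : H → ℝ is convex differentiable with E'(u) v = ⟪Q(u) u, v⟫ and ⟪A(w), w⟫ = -D(w) with D(w) ≥ 0. If the sequence (uⁿ) satisfies the implicit Euler scheme ⟪Q(uⁿ)* (uⁿ - uⁿ⁻¹)/τ, v⟫ = ⟪A(uⁿ), v⟫ for all v ∈ H with step size τ > 0, then E(uⁿ) + τ D(uⁿ) ≤ E(uⁿ⁻¹) for every n ≥ 1; in particular E(uⁿ) ≤ E(u⁰) for all n. -/
/-!
Testing the scheme against `uⁿ` turns the gradient term `E'(uⁿ)(uⁿ - uⁿ⁻¹) = ⟪Q(uⁿ) uⁿ, uⁿ - uⁿ⁻¹⟫`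
into `τ ⟪A(uⁿ), uⁿ⟫ = -τ D(uⁿ)`, and convexity of `E` bounds `E(uⁿ) - E(uⁿ⁻¹)` by that gradient
term. Since `D ≥ 0`, the energies are then nonincreasing.
-/

open scoped RealInnerProductSpace

theorem ConvexOn.sub_le_fderiv_sub {E : Type*} [NormedAddCommGroup E] [NormedSpace ℝ E]
    {s : Set E} {f : E → ℝ} {f' : E →L[ℝ] ℝ} {x y : E} (hf : ConvexOn ℝ s f)
    (hx : x ∈ s) (hy : y ∈ s) (hf' : HasFDerivAt f f' x) :
    f x - f y ≤ f' (x - y) := by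
  let g := AffineMap.lineMap (k := ℝ) y x
  have hg : ConvexOn ℝ (g ⁻¹' s) (f ∘ g) := hf.comp_affineMap g
  have hderiv : HasDerivAt (f ∘ g) (f' (x - y)) 1 := by
    have hg1 : g 1 = x := AffineMap.lineMap_apply_one y x
    exact (hg1 ▸ hf').comp_hasDerivAt 1 AffineMap.hasDerivAt_lineMap
  have hslope := hg.slope_le_of_hasDerivAt (x := 0) (y := 1) (by simpa [g] using hy)
    (by simpa [g] using hx) one_pos hderiv
  simpa [slope, g] using hslope

theorem inner_apply_eq_mul_inner_of_adjoint_apply_eq {H F : Type*} [NormedAddCommGroup H]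
    [InnerProductSpace ℝ H] [CompleteSpace H] [NormedAddCommGroup F] [InnerProductSpace ℝ F]
    [CompleteSpace F] {T : H →L[ℝ] F} {τ : ℝ} (hτ : τ ≠ 0) {d : F} {a : H}
    (h : ContinuousLinearMap.adjoint T (τ⁻¹ • d) = a) (w : H) :
    ⟪T w, d⟫ = τ * ⟪a, w⟫ := by
  calc ⟪T w, d⟫ = τ * ⟪T w, τ⁻¹ • d⟫ := by
        rw [real_inner_smul_right, ← mul_assoc, mul_inv_cancel₀ hτ, one_mul]
    _ = τ * ⟪a, w⟫ := by
        rw [← ContinuousLinearMap.adjoint_inner_right, h, real_inner_comm]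

/-- Implicit Euler dissipation inequality: for the scheme
`Q(uⁿ)* ((uⁿ - uⁿ⁻¹)/τ) = A(uⁿ)` one has `E(uⁿ) + τ D(uⁿ) ≤ E(uⁿ⁻¹)` with
`D(w) = -⟪A w, w⟫ ≥ 0`, and in particular `E(uⁿ) ≤ E(u⁰)`. -/
theorem implicit_euler_dissipation
    {H : Type*} [NormedAddCommGroup H] [InnerProductSpace ℝ H] [CompleteSpace H]
    (E : H → ℝ) (hE : Differentiable ℝ E)
    (hconv : ConvexOn ℝ Set.univ E)
    (Q : H → (H →L[ℝ] H))
    (hQ : ∀ u v : H, fderiv ℝ E u v = ⟪Q u u, v⟫)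
    (A : H → H) (hA : ∀ w : H, 0 ≤ -⟪A w, w⟫)
    (τ : ℝ) (hτ : 0 < τ)
    (u : ℕ → H)
    (hscheme : ∀ n : ℕ, 1 ≤ n →
      ContinuousLinearMap.adjoint (Q (u n)) (τ⁻¹ • (u n - u (n - 1))) = A (u n)) :
    (∀ n : ℕ, 1 ≤ n → E (u n) + τ * (-⟪A (u n), u n⟫) ≤ E (u (n - 1))) ∧
      (∀ n : ℕ, E (u n) ≤ E (u 0)) := by
  have dissipation : ∀ n : ℕ, 1 ≤ n → E (u n) + τ * (-⟪A (u n), u n⟫) ≤ E (u (n - 1)) := by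
    intro n hn
    have hgrad := hconv.sub_le_fderiv_sub (Set.mem_univ (u n)) (Set.mem_univ (u (n - 1)))
      (hE (u n)).hasFDerivAt
    rw [hQ, inner_apply_eq_mul_inner_of_adjoint_apply_eq hτ.ne' (hscheme n hn)] at hgrad
    linarith
  refine ⟨dissipation, fun n =>
    antitone_nat_of_succ_le (f := fun n => E (u n)) (fun n => ?_) (Nat.zero_le n)⟩
  have := dissipation (n + 1) (Nat.le_add_left 1 n)
  rw [Nat.add_sub_cancel] at this
  nlinarith [mul_nonneg hτ.le (hA (u (n + 1)))]
end
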